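/- Let r ≥ 1, d ≥ 1 with d ≤ r, and let A(k, s) for k ≥ 1, s ∈ ℤ be commuting indeterminates, subject to the symmetry A(k, r − t) = A(k, kd + t' − 1) whenever r − t = kd + t' − 1 (i.e., A(k,s) depends only on s). For 0 ≤ i ≤ r and j ≥ 0 define C(i, j) as the nested sum C(i,j) = ∑_{ℓ=1}^{j} (−1)^{ℓ} ∑_{i_1+⋯+i_ℓ=j, i_a ≥ 1} ∑_{0 ≤ u_ℓ ≤ ⋯ ≤ u_1 ≤ i−jd} ∏_{a=1}^{ℓ} i_a A(i_a, r − (j−i_1−⋯−i_a)d − u_a) for 1 ≤ j with jd ≤ i, with C(i,0) = 1 and C(i,j) = 0 if jd > i. Define D(j) := ∑_{ℓ=1}^{j} (−1)^{ℓ+1} ∑_{i_1+⋯+i_ℓ=j, i_a ≥ 1} ∑_{0 ≤ u_ℓ ≤ ⋯ ≤ u_1 ≤ r+1−jd} ∏_{a=1}^{ℓ} i_a A(i_a, r − (j−i_1−⋯−i_a)d − u_a). Then for every 1 ≤ j ≤ ⌊r/d⌋: ∑_{i=0}^{r} ∑_{h+s=j, h,s ≥ 0, hd ≤ i, sd ≤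 r−i} C(i, h)·C(r−i, s) = −(r − jd + 1)·D(j). -/

import Mathlib

open Finset

variable {R : Type*} [CommRing R]

/-- The nested-sum expression `C(i,j)` for `Coeff(H^i, q^j H^{⋆(i-jd)})`, for generic
commuting quantities `A k s` (playing the role of the normalized two-point invariants
`α^k_s`): `C(i,0) = 1`, `C(i,j) = 0` for `jd > i`, and otherwise
`C(i,j) = ∑_{ℓ=1}^{j} (-1)^ℓ ∑_{i_1+⋯+i_ℓ=j, i_a ≥ 1} ∑_{0 ≤ u_ℓ ≤ ⋯ ≤ u_1 ≤ i-jd}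
  ∏_{a=1}^{ℓ} i_a · A(i_a, r-(j-i_1-⋯-i_a)d-u_a)`.
The tuple `y : Fin ℓ → ℕ` encodes `(i_1,…,i_ℓ)` (with `y 0 = i_1`) and `u : Fin ℓ → ℕ`
encodes `(u_1,…,u_ℓ)` (with `u 0 = u_1`, so `u_ℓ ≤ ⋯ ≤ u_1` reads `a ≤ b → u b ≤ u a`). -/
def Cfun (A : ℕ → ℤ → R) (r d i j : ℕ) : R :=
  if j = 0 then 1
  else if i < j * d then 0
  else
    ∑ ℓ ∈ Icc 1 j, (-1 : R) ^ ℓ *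
      ∑ y ∈ (Fintype.piFinset fun _ : Fin ℓ => Icc 1 j).filter
          (fun y => ∑ a, y a = j),
        ∑ u ∈ (Fintype.piFinset fun _ : Fin ℓ => Finset.range (i - j * d + 1)).filter
            (fun u => ∀ a b : Fin ℓ, a ≤ b → u b ≤ u a),
          ∏ a : Fin ℓ,
            (y a : R) *
              A (y a) ((r : ℤ) - ((j : ℤ) - ∑ b ∈ Iic a, (y b : ℤ)) * (d : ℤ) - (u a : ℤ))

/-- The nested-sum expression `D(j)` for `Coeff(H^{⋆(r+1)}, q^j H^{⋆(r+1-jd)})`: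
`D(j) = ∑_{ℓ=1}^{j} (-1)^{ℓ+1} ∑_{i_1+⋯+i_ℓ=j, i_a ≥ 1} ∑_{0 ≤ u_ℓ ≤ ⋯ ≤ u_1 ≤ r+1-jd}
  ∏_{a=1}^{ℓ} i_a · A(i_a, r-(j-i_1-⋯-i_a)d-u_a)`. -/
def Dfun (A : ℕ → ℤ → R) (r d j : ℕ) : R :=
  ∑ ℓ ∈ Icc 1 j, (-1 : R) ^ (ℓ + 1) *
    ∑ y ∈ (Fintype.piFinset fun _ : Fin ℓ => Icc 1 j).filter
        (fun y => ∑ a, y a = j),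
      ∑ u ∈ (Fintype.piFinset fun _ : Fin ℓ => Finset.range (r + 1 - j * d + 1)).filter
          (fun u => ∀ a b : Fin ℓ, a ≤ b → u b ≤ u a),
        ∏ a : Fin ℓ,
          (y a : R) *
            A (y a) ((r : ℤ) - ((j : ℤ) - ∑ b ∈ Iic a, (y b : ℤ)) * (d : ℤ) - (u a : ℤ))

def psi (A : ℕ → ℤ → R) (r d : ℕ) : ℤ → ℤ → ℕ → R
  | _, _, 0 => 1
  | lo, hi, j+1 =>
    if hi < lo then 0
    else psi A r d lo (hi-1) (j+1)
      - ∑ k ∈ (Icc 1 (j+1)).attach,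
          (k.1 : R) * A k.1 ((r:ℤ) - (((j:ℤ)+1) - (k.1:ℤ)) * d - hi) * psi A r d lo hi (j+1-k.1)
termination_by lo hi j => (j, (hi - lo + 1).toNat)
decreasing_by
  · apply Prod.Lex.right
    omega
  · have := k.2
    simp only [mem_Icc] at this
    apply Prod.Lex.left
    omega

lemma psi_zero (A : ℕ → ℤ → R) (r d : ℕ) (lo hi : ℤ) : psi A r d lo hi 0 = 1 := by
  rw [psi]

lemma psi_eq_zero (A : ℕ → ℤ → R) (r d : ℕ) {lo hi : ℤ} {j : ℕ} (h : hi < lo) (hj : 1 ≤ j) :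
    psi A r d lo hi j = 0 := by
  obtain ⟨m, rfl⟩ : ∃ m, j = m + 1 := ⟨j - 1, by omega⟩
  rw [psi, if_pos h]

lemma psi_rec1 (A : ℕ → ℤ → R) (r d : ℕ) {lo hi : ℤ} {j : ℕ} (h : lo ≤ hi) (hj : 1 ≤ j) :
    psi A r d lo hi j = psi A r d lo (hi-1) j
      - ∑ k ∈ Icc 1 j,
          (k : R) * A k ((r:ℤ) - ((j:ℤ) - (k:ℤ)) * d - hi) * psi A r d lo hi (j-k) := by
  obtain ⟨m, rfl⟩ : ∃ m, j = m + 1 := ⟨j - 1, by omega⟩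
  rw [psi, if_neg (not_lt.2 h), ← Finset.sum_attach (Icc 1 (m+1))]
  congr 1

lemma Icc_filter_eq (j m : ℕ) : Icc 1 (j - m) = (Icc 1 j).filter (fun k => m + k ≤ j) := by
  ext k; simp only [mem_Icc, mem_filter]; omega

lemma tri_swap (s : Finset ℕ) (j : ℕ) (f : ℕ → ℕ → R) :
    ∑ m ∈ s, ∑ k ∈ Icc 1 (j - m), f m k
      = ∑ k ∈ Icc 1 j, ∑ m ∈ s.filter (fun m => m + k ≤ j), f m k := by
  calc ∑ m ∈ s, ∑ k ∈ Icc 1 (j - m), f m k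
      = ∑ m ∈ s, ∑ k ∈ Icc 1 j, if m + k ≤ j then f m k else 0 := by
        refine sum_congr rfl fun m _ => ?_
        rw [Icc_filter_eq j m, sum_filter]
    _ = ∑ k ∈ Icc 1 j, ∑ m ∈ s, if m + k ≤ j then f m k else 0 := Finset.sum_comm
    _ = _ := by
        refine sum_congr rfl fun k _ => ?_
        rw [sum_filter]

lemma tri_swap' (s : Finset ℕ) (j : ℕ) (f : ℕ → ℕ → R)
    (hs : ∀ k ∈ Icc 1 j, s.filter (fun m => m + k ≤ j) = Icc 1 (j - k)) :
    ∑ m ∈ s, ∑ k ∈ Icc 1 (j - m), f m k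
      = ∑ k ∈ Icc 1 j, ∑ m ∈ Icc 1 (j - k), f m k := by
  rw [tri_swap]
  exact sum_congr rfl fun k hk => by rw [hs k hk]

lemma erase_Icc (j : ℕ) (hj : 1 ≤ j) : (Icc 1 j).erase j = Icc 1 (j - 1) := by
  ext m; simp only [mem_erase, mem_Icc]; omega

lemma psi_col (A : ℕ → ℤ → R) (r d : ℕ) : ∀ j, 1 ≤ j → ∀ lo : ℤ,
    psi A r d lo lo j
      = -∑ k ∈ Icc 1 j, (k:R) * A k ((r:ℤ) - lo)
          * psi A r d (lo + (k:ℤ)*d) (lo + (k:ℤ)*d) (j - k) := by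
  intro j
  induction j using Nat.strong_induction_on with
  | _ j ih =>
  intro hj lo
  rw [psi_rec1 A r d le_rfl hj, psi_eq_zero A r d (by omega) hj, zero_sub, neg_inj]
  have corner : ∀ x : ℤ, (r:ℤ) - ((j:ℤ) - (j:ℤ)) * d - x = (r:ℤ) - x := by intro x; ring
  -- expand LHS
  have hL : ∑ k ∈ Icc 1 j,
        (k : R) * A k ((r:ℤ) - ((j:ℤ) - (k:ℤ)) * d - lo) * psi A r d lo lo (j-k)
      = (∑ m ∈ Icc 1 j, ∑ k ∈ Icc 1 (j - m),
          -((m:R) * A m ((r:ℤ) - ((j:ℤ) - (m:ℤ)) * d - lo) *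
            ((k:R) * A k ((r:ℤ) - lo)
              * psi A r d (lo + (k:ℤ)*d) (lo + (k:ℤ)*d) (j - m - k))))
        + (j:R) * A j ((r:ℤ) - lo) := by
    rw [← Finset.add_sum_erase (Icc 1 j) _ (mem_Icc.mpr ⟨hj, le_rfl⟩), add_comm]
    congr 1
    · rw [eq_comm]
      rw [← Finset.sum_subset (erase_subset j (Icc 1 j))
          (by intro m hm hm'
              have : m = j := by
                by_contra hne
                exact hm' (mem_erase.mpr ⟨hne, hm⟩)
              subst this
              rw [Nat.sub_self]
              simp)]
      refine sum_congr rfl fun m hm => ?_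
      have hmj : m < j := by
        have h1 := mem_Icc.mp (mem_of_mem_erase hm)
        have h2 := (mem_erase.mp hm).1
        omega
      have h1m : 1 ≤ m := (mem_Icc.mp (mem_of_mem_erase hm)).1
      rw [ih (j - m) (by omega) (by omega) lo, mul_neg, Finset.mul_sum, ← Finset.sum_neg_distrib]
    · rw [Nat.sub_self]
      show (j:R) * A j _ * psi A r d lo lo 0 = _
      rw [psi_zero A r d lo lo, mul_one, corner]
  rw [hL]
  -- expand RHS
  have hR : ∑ k ∈ Icc 1 j,
        (k:R) * A k ((r:ℤ) - lo) * psi A r d (lo + (k:ℤ)*d) (lo + (k:ℤ)*d) (j - k)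
      = (∑ k ∈ Icc 1 j, ∑ m ∈ Icc 1 (j - k),
          -((k:R) * A k ((r:ℤ) - lo) *
            ((m:R) * A m ((r:ℤ) - (((j-k:ℕ):ℤ) - (m:ℤ)) * d - (lo + (k:ℤ)*d))
              * psi A r d (lo + (k:ℤ)*d) (lo + (k:ℤ)*d) (j - k - m))))
        + (j:R) * A j ((r:ℤ) - lo) := by
    rw [← Finset.add_sum_erase (Icc 1 j) _ (mem_Icc.mpr ⟨hj, le_rfl⟩), add_comm]
    congr 1
    · rw [eq_comm]
      rw [← Finset.sum_subset (erase_subset j (Icc 1 j))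
          (by intro m hm hm'
              have : m = j := by
                by_contra hne
                exact hm' (mem_erase.mpr ⟨hne, hm⟩)
              subst this
              rw [Nat.sub_self]
              simp)]
      refine sum_congr rfl fun k hk => ?_
      have hkj : k < j := by
        have h1 := mem_Icc.mp (mem_of_mem_erase hk)
        have h2 := (mem_erase.mp hk).1
        omega
      rw [psi_rec1 A r d le_rfl (by omega : 1 ≤ j - k),
          psi_eq_zero A r d (by omega) (by omega : 1 ≤ j - k), zero_sub, mul_neg,
          Finset.mul_sum, ← Finset.sum_neg_distrib]
    · rw [Nat.sub_self]
      show (j:R) * A j _ * psi A r d _ _ 0 = _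
      rw [psi_zero A r d _ _, mul_one]
  rw [hR]
  congr 1
  rw [tri_swap' (Icc 1 j) j _ (fun k hk => by
    ext m; simp only [mem_Icc, mem_filter]; omega)]
  refine sum_congr rfl fun k hk => sum_congr rfl fun m hm => ?_
  have hk' := mem_Icc.mp hk
  have hm' := mem_Icc.mp hm
  have hcast : ((j - k : ℕ) : ℤ) = (j:ℤ) - k := by
    have : k ≤ j := hk'.2
    omega
  have harg : (r:ℤ) - (((j-k:ℕ):ℤ) - (m:ℤ)) * d - (lo + (k:ℤ)*d)
      = (r:ℤ) - ((j:ℤ) - (m:ℤ)) * d - lo := by rw [hcast]; ring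
  rw [harg, show j - m - k = j - k - m by omega]
  ring


lemma psi_rec2_aux (A : ℕ → ℤ → R) (r d : ℕ) : ∀ n : ℕ, ∀ (lo hi : ℤ) (j : ℕ), 1 ≤ j → lo ≤ hi →
    j + (hi - lo).toNat ≤ n →
    psi A r d lo hi j = psi A r d (lo+1) hi j
      - ∑ k ∈ Icc 1 j, (k:R) * A k ((r:ℤ) - lo)
          * psi A r d (lo + (k:ℤ)*d) (hi + (k:ℤ)*d) (j - k) := by
  intro n
  induction n with
  | zero => intro lo hi j hj _ hn; omega
  | succ n ih =>
    intro lo hi j hj hlh hn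
    rcases eq_or_lt_of_le hlh with heq | hlt
    · subst heq
      rw [psi_col A r d j hj lo, psi_eq_zero A r d (by omega) hj, zero_sub]
    · have h1 : lo + 1 ≤ hi := hlt
      have hQ : ∀ m ∈ Icc 1 j, psi A r d lo hi (j - m)
          = psi A r d (lo+1) hi (j-m)
            - ∑ k ∈ Icc 1 (j-m), (k:R) * A k ((r:ℤ)-lo)
                * psi A r d (lo+(k:ℤ)*d) (hi+(k:ℤ)*d) (j-m-k) := by
        intro m hm
        have hm' := mem_Icc.mp hm
        rcases eq_or_ne m j with rfl | hne
        · rw [Nat.sub_self, psi_zero, psi_zero, Finset.Icc_eq_empty (by omega), sum_empty,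
            sub_zero]
        · exact ih lo hi (j-m) (by omega) hlh (by omega)
      have hW : ∀ k ∈ Icc 1 j,
          (k:R) * A k ((r:ℤ) - lo) * psi A r d (lo+(k:ℤ)*d) (hi+(k:ℤ)*d) (j-k)
          = (k:R) * A k ((r:ℤ) - lo) * (psi A r d (lo+(k:ℤ)*d) (hi+(k:ℤ)*d - 1) (j-k)
            - ∑ m ∈ Icc 1 (j-k),
                (m:R) * A m ((r:ℤ) - (((j-k:ℕ):ℤ) - (m:ℤ)) * d - (hi+(k:ℤ)*d))
                  * psi A r d (lo+(k:ℤ)*d) (hi+(k:ℤ)*d) (j-k-m)) := by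
        intro k hk
        have hk' := mem_Icc.mp hk
        rcases eq_or_ne k j with rfl | hne
        · rw [Nat.sub_self, psi_zero, psi_zero, Finset.Icc_eq_empty (by omega), sum_empty,
            sub_zero]
        · rw [psi_rec1 A r d (by omega : lo+(k:ℤ)*d ≤ hi+(k:ℤ)*d) (by omega : 1 ≤ j - k)]
      have hQ' : ∀ m ∈ Icc 1 j,
          (m:R) * A m ((r:ℤ) - ((j:ℤ) - (m:ℤ)) * d - hi) * psi A r d lo hi (j - m)
          = (m:R) * A m ((r:ℤ) - ((j:ℤ) - (m:ℤ)) * d - hi) * (psi A r d (lo+1) hi (j-m)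
            - ∑ k ∈ Icc 1 (j-m), (k:R) * A k ((r:ℤ)-lo)
                * psi A r d (lo+(k:ℤ)*d) (hi+(k:ℤ)*d) (j-m-k)) := by
        intro m hm
        rw [hQ m hm]
      rw [psi_rec1 A r d hlh hj, ih lo (hi-1) j hj (by omega) (by omega),
        psi_rec1 A r d h1 hj, sum_congr rfl hQ', sum_congr rfl hW]
      simp only [mul_sub, Finset.sum_sub_distrib, Finset.mul_sum]
      have hS1 : ∑ k ∈ Icc 1 j, (k:R) * A k ((r:ℤ)-lo)
            * psi A r d (lo+(k:ℤ)*d) ((hi-1)+(k:ℤ)*d) (j-k)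
          = ∑ k ∈ Icc 1 j, (k:R) * A k ((r:ℤ)-lo)
            * psi A r d (lo+(k:ℤ)*d) (hi+(k:ℤ)*d - 1) (j-k) := by
        refine sum_congr rfl fun k _ => ?_
        rw [show (hi-1)+(k:ℤ)*d = hi+(k:ℤ)*d - 1 by ring]
      have hDD : ∑ m ∈ Icc 1 j, ∑ k ∈ Icc 1 (j-m),
            (m:R) * A m ((r:ℤ) - ((j:ℤ) - (m:ℤ)) * d - hi)
              * ((k:R) * A k ((r:ℤ)-lo) * psi A r d (lo+(k:ℤ)*d) (hi+(k:ℤ)*d) (j-m-k))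
          = ∑ k ∈ Icc 1 j, ∑ m ∈ Icc 1 (j-k),
            (k:R) * A k ((r:ℤ)-lo)
              * ((m:R) * A m ((r:ℤ) - (((j-k:ℕ):ℤ) - (m:ℤ)) * d - (hi+(k:ℤ)*d))
                * psi A r d (lo+(k:ℤ)*d) (hi+(k:ℤ)*d) (j-k-m)) := by
        rw [tri_swap' (Icc 1 j) j _ (fun k hk => by
          ext m; simp only [mem_Icc, mem_filter]; omega)]
        refine sum_congr rfl fun k hk => sum_congr rfl fun m hm => ?_
        have hk' := mem_Icc.mp hk
        have harg : (r:ℤ) - (((j-k:ℕ):ℤ) - (m:ℤ)) * d - (hi+(k:ℤ)*d)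
            = (r:ℤ) - ((j:ℤ) - (m:ℤ)) * d - hi := by
          have : ((j - k : ℕ) : ℤ) = (j:ℤ) - k := by omega
          rw [this]; ring
        rw [harg, show j - m - k = j - k - m by omega]
        ring
      rw [hS1, hDD]
      ring

lemma psi_rec2 (A : ℕ → ℤ → R) (r d : ℕ) {lo hi : ℤ} {j : ℕ} (hj : 1 ≤ j) (hlh : lo ≤ hi) :
    psi A r d lo hi j = psi A r d (lo+1) hi j
      - ∑ k ∈ Icc 1 j, (k:R) * A k ((r:ℤ) - lo)
          * psi A r d (lo + (k:ℤ)*d) (hi + (k:ℤ)*d) (j - k) :=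
  psi_rec2_aux A r d (j + (hi - lo).toNat) lo hi j hj hlh le_rfl


lemma psi_flip_aux (A : ℕ → ℤ → R) (r d : ℕ)
    (hsym : ∀ (k : ℕ) (t : ℤ), 1 ≤ k → A k ((r : ℤ) - t) = A k ((k : ℤ) * (d : ℤ) + t - 1)) :
    ∀ n : ℕ, ∀ (lo hi : ℤ) (j : ℕ), j + (hi - lo).toNat ≤ n →
    psi A r d lo hi j
      = psi A r d ((r:ℤ) - (j:ℤ)*d + 1 - hi) ((r:ℤ) - (j:ℤ)*d + 1 - lo) j := by
  intro n
  induction n with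
  | zero =>
    intro lo hi j hn
    have hj : j = 0 := by omega
    subst hj
    rw [psi_zero, psi_zero]
  | succ n ih =>
    intro lo hi j hn
    rcases Nat.eq_zero_or_pos j with rfl | hj
    · rw [psi_zero, psi_zero]
    rcases lt_or_ge hi lo with hlt | hle
    · rw [psi_eq_zero A r d hlt hj, psi_eq_zero A r d (by omega) hj]
    · rw [psi_rec1 A r d hle hj,
        psi_rec2 A r d hj (by omega : (r:ℤ)-(j:ℤ)*d+1-hi ≤ (r:ℤ)-(j:ℤ)*d+1-lo)]
      congr 1
      · rcases lt_or_ge (hi-1) lo with h2 | h2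
        · rw [psi_eq_zero A r d h2 hj, psi_eq_zero A r d (by linarith) hj]
        · rw [ih lo (hi-1) j (by omega)]
          congr 1
          ring
      · refine sum_congr rfl fun k hk => ?_
        have hk' := mem_Icc.mp hk
        rw [ih lo hi (j-k) (by omega)]
        have hc : ((j-k:ℕ):ℤ) = (j:ℤ)-(k:ℤ) := by omega
        have hA : A k ((r:ℤ) - ((j:ℤ)-(k:ℤ))*d - hi)
            = A k ((r:ℤ) - ((r:ℤ) - (j:ℤ)*d + 1 - hi)) := by
          have h := hsym k (((j:ℤ)-(k:ℤ))*d + hi) hk'.1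
          rw [show (r:ℤ) - ((j:ℤ)-(k:ℤ))*d - hi = (r:ℤ) - (((j:ℤ)-(k:ℤ))*d + hi) by ring, h]
          congr 1
          ring
        rw [hA,
          show (r:ℤ) - ((j-k:ℕ):ℤ)*d + 1 - hi = (r:ℤ) - (j:ℤ)*d + 1 - hi + (k:ℤ)*d by
            rw [hc]; ring,
          show (r:ℤ) - ((j-k:ℕ):ℤ)*d + 1 - lo = (r:ℤ) - (j:ℤ)*d + 1 - lo + (k:ℤ)*d by
            rw [hc]; ring]

lemma psi_flip (A : ℕ → ℤ → R) (r d : ℕ)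
    (hsym : ∀ (k : ℕ) (t : ℤ), 1 ≤ k → A k ((r : ℤ) - t) = A k ((k : ℤ) * (d : ℤ) + t - 1))
    (lo hi : ℤ) (j : ℕ) :
    psi A r d lo hi j
      = psi A r d ((r:ℤ) - (j:ℤ)*d + 1 - hi) ((r:ℤ) - (j:ℤ)*d + 1 - lo) j :=
  psi_flip_aux A r d hsym (j + (hi - lo).toNat) lo hi j le_rfl

lemma psi_split_aux (A : ℕ → ℤ → R) (r d : ℕ) :
    ∀ n : ℕ, ∀ (lo hi c : ℤ) (j : ℕ), lo - 1 ≤ c → c ≤ hi → j + (hi - c).toNat ≤ n →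
    psi A r d lo hi j
      = ∑ h ∈ Finset.range (j+1),
          psi A r d (c+1+(h:ℤ)*d) (hi+(h:ℤ)*d) (j-h) * psi A r d lo c h := by
  intro n
  induction n with
  | zero =>
    intro lo hi c j hlc hch hn
    have hj : j = 0 := by omega
    have hce : c = hi := by omega
    subst hj; subst hce
    simp [psi_zero]
  | succ n ih =>
    intro lo hi c j hlc hch hn
    rcases eq_or_lt_of_le hch with rfl | hlt
    · -- c = hi : only h = j survives
      rw [Finset.sum_eq_single_of_mem j (self_mem_range_succ j)
          (fun h hmem hne => by
            have hh : h < j + 1 := Finset.mem_range.mp hmem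
            rw [psi_eq_zero A r d (by omega : c+(h:ℤ)*d < c+1+(h:ℤ)*d)
              (by omega : 1 ≤ j - h), zero_mul])]
      rw [Nat.sub_self, psi_zero, one_mul]
    · rcases Nat.eq_zero_or_pos j with rfl | hj
      · rw [psi_zero]
        simp [psi_zero]
      have hle : lo ≤ hi := by omega
      have hQ : ∀ h ∈ Finset.range (j+1),
          psi A r d (c+1+(h:ℤ)*d) (hi+(h:ℤ)*d) (j-h) * psi A r d lo c h
          = (psi A r d (c+1+(h:ℤ)*d) (hi+(h:ℤ)*d-1) (j-h)
              - ∑ k ∈ Icc 1 (j-h),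
                  (k:R) * A k ((r:ℤ) - (((j-h:ℕ):ℤ) - (k:ℤ))*d - (hi+(h:ℤ)*d))
                    * psi A r d (c+1+(h:ℤ)*d) (hi+(h:ℤ)*d) (j-h-k))
            * psi A r d lo c h := by
        intro h hh
        have hh' := Finset.mem_range.mp hh
        rcases eq_or_ne h j with rfl | hne
        · rw [Nat.sub_self, psi_zero, psi_zero, Finset.Icc_eq_empty (by omega), sum_empty,
            sub_zero]
        · rw [psi_rec1 A r d (by omega : c+1+(h:ℤ)*d ≤ hi+(h:ℤ)*d) (by omega : 1 ≤ j - h)]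
      rw [psi_rec1 A r d hle hj, ih lo (hi-1) c j hlc (by omega) (by omega),
        sum_congr rfl hQ]
      have hT : ∀ k ∈ Icc 1 j,
          (k:R) * A k ((r:ℤ) - ((j:ℤ)-(k:ℤ))*d - hi) * psi A r d lo hi (j-k)
          = (k:R) * A k ((r:ℤ) - ((j:ℤ)-(k:ℤ))*d - hi)
              * ∑ h ∈ Finset.range (j-k+1),
                  psi A r d (c+1+(h:ℤ)*d) (hi+(h:ℤ)*d) (j-k-h) * psi A r d lo c h := by
        intro k hk
        have hk' := mem_Icc.mp hk
        rw [ih lo hi c (j-k) hlc (by omega) (by omega)]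
      rw [sum_congr rfl hT]
      simp only [sub_mul, Finset.sum_sub_distrib, Finset.sum_mul, Finset.mul_sum]
      congr 1
      · refine sum_congr rfl fun h _ => ?_
        rw [show (hi-1)+(h:ℤ)*d = hi+(h:ℤ)*d - 1 by ring]
      · -- double sums swap
        rw [tri_swap (Finset.range (j+1)) j]
        refine sum_congr rfl fun k hk => ?_
        have hk' := mem_Icc.mp hk
        rw [show (Finset.range (j+1)).filter (fun h => h + k ≤ j) = Finset.range (j-k+1) by
          ext h; simp only [mem_filter, Finset.mem_range]; omega]
        refine sum_congr rfl fun h hh => ?_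
        have hh' := Finset.mem_range.mp hh
        have harg : (r:ℤ) - (((j-h:ℕ):ℤ)*(d:ℤ) - (k:ℤ)*d) - (hi+(h:ℤ)*d)
            = (r:ℤ) - ((j:ℤ)*(d:ℤ)-(k:ℤ)*d) - hi := by
          have : ((j - h : ℕ) : ℤ) = (j:ℤ) - h := by omega
          rw [this]; ring
        rw [harg, show j - h - k = j - k - h by omega]
        ring


lemma psi_split (A : ℕ → ℤ → R) (r d : ℕ) {lo hi c : ℤ} {j : ℕ} (h1 : lo - 1 ≤ c) (h2 : c ≤ hi) :
    psi A r d lo hi j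
      = ∑ h ∈ Finset.range (j+1),
          psi A r d (c+1+(h:ℤ)*d) (hi+(h:ℤ)*d) (j-h) * psi A r d lo c h :=
  psi_split_aux A r d (j + (hi - c).toNat) lo hi c j h1 h2 le_rfl

lemma sum_piFinset_succ {M : Type*} [AddCommMonoid M] (n : ℕ) (s : Finset ℕ)
    (g : (Fin (n+1) → ℕ) → M) :
    ∑ y ∈ Fintype.piFinset (fun _ : Fin (n+1) => s), g y
      = ∑ k ∈ s, ∑ y' ∈ Fintype.piFinset (fun _ : Fin n => s), g (Fin.cons k y') := by
  rw [← Finset.sum_product']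
  refine (Finset.sum_nbij' (fun y => ((y 0, Fin.tail y) : ℕ × (Fin n → ℕ)))
    (fun p => Fin.cons p.1 p.2) ?_ ?_ ?_ ?_ ?_).symm.symm
  · intro y hy
    rw [Fintype.mem_piFinset] at hy
    refine Finset.mem_product.mpr ⟨hy 0, ?_⟩
    rw [Fintype.mem_piFinset]
    intro a
    exact hy a.succ
  · intro p hp
    obtain ⟨h1, h2⟩ := Finset.mem_product.mp hp
    rw [Fintype.mem_piFinset] at h2 ⊢
    intro a
    rcases Fin.eq_zero_or_eq_succ a with rfl | ⟨b, rfl⟩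
    · simpa using h1
    · simpa using h2 b
  · intro y _
    exact Fin.cons_self_tail y
  · intro p _
    simp [Fin.tail_cons]
  · intro y _
    rw [Fin.cons_self_tail]

lemma sum_Iic_succ {M : Type*} [AddCommMonoid M] {n : ℕ} (f : Fin (n+1) → M) (a : Fin n) :
    ∑ b ∈ Iic a.succ, f b = f 0 + ∑ b ∈ Iic a, f b.succ := by
  have hins : (Iic a.succ : Finset (Fin (n+1)))
      = insert 0 ((Iic a).map ⟨Fin.succ, Fin.succ_injective n⟩) := by
    ext b
    simp only [mem_Iic, mem_insert, mem_map, Function.Embedding.coeFn_mk]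
    constructor
    · intro hb
      rcases Fin.eq_zero_or_eq_succ b with rfl | ⟨c, rfl⟩
      · exact Or.inl rfl
      · exact Or.inr ⟨c, by simpa [Fin.succ_le_succ_iff] using hb, rfl⟩
    · rintro (rfl | ⟨c, hc, rfl⟩)
      · exact Fin.zero_le _
      · exact Fin.succ_le_succ_iff.mpr (by simpa using hc)
  rw [hins, Finset.sum_insert (by simp [Fin.succ_ne_zero, eq_comm]), Finset.sum_map]
  rfl

lemma Iic_zero_fin (n : ℕ) : (Iic (0 : Fin (n+1))) = {0} := by
  ext b
  simp [mem_Iic, Fin.le_zero_iff]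

/-- The generic inner nested sum. -/
def Yterm (A : ℕ → ℤ → R) (r d n hi ℓ : ℕ) : R :=
  ∑ y ∈ (Fintype.piFinset fun _ : Fin ℓ => Icc 1 n).filter (fun y => ∑ a, y a = n),
    ∑ u ∈ (Fintype.piFinset fun _ : Fin ℓ => Finset.range (hi + 1)).filter
        (fun u => ∀ a b : Fin ℓ, a ≤ b → u b ≤ u a),
      ∏ a : Fin ℓ,
        (y a : R) * A (y a) ((r : ℤ) - ((n : ℤ) - ∑ b ∈ Iic a, (y b : ℤ)) * (d:ℤ) - (u a : ℤ))

def Nsum (A : ℕ → ℤ → R) (r d j hi : ℕ) : R := ∑ ℓ ∈ Icc 1 j, (-1:R)^ℓ * Yterm A r d j hi ℓ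

/-- top slice: `u 0 = hi` forced. -/
def Ytop (A : ℕ → ℤ → R) (r d n hi m : ℕ) : R :=
  ∑ y ∈ (Fintype.piFinset fun _ : Fin (m+1) => Icc 1 n).filter (fun y => ∑ a, y a = n),
    ∑ u ∈ (Fintype.piFinset fun _ : Fin (m+1) => Finset.range (hi + 1)).filter
        (fun u => (∀ a b : Fin (m+1), a ≤ b → u b ≤ u a) ∧ u 0 = hi),
      ∏ a : Fin (m+1),
        (y a : R) * A (y a) ((r : ℤ) - ((n : ℤ) - ∑ b ∈ Iic a, (y b : ℤ)) * (d:ℤ) - (u a : ℤ))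

lemma Yterm_eq_zero {A : ℕ → ℤ → R} {r d n hi ℓ : ℕ} (h : n < ℓ) : Yterm A r d n hi ℓ = 0 := by
  rw [Yterm, Finset.sum_eq_zero]
  intro y hy
  exfalso
  rw [mem_filter, Fintype.mem_piFinset] at hy
  have hle : ∀ a : Fin ℓ, 1 ≤ y a := fun a => (mem_Icc.mp (hy.1 a)).1
  have : (ℓ : ℕ) ≤ ∑ a, y a := by
    calc (ℓ : ℕ) = ∑ _a : Fin ℓ, 1 := by simp
    _ ≤ ∑ a, y a := Finset.sum_le_sum fun a _ => hle a
  omega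

lemma Yterm_zero_zero {A : ℕ → ℤ → R} {r d hi : ℕ} : Yterm A r d 0 hi 0 = 1 := by
  rw [Yterm]
  rw [show (Fintype.piFinset fun _ : Fin 0 => Icc 1 0).filter (fun y => ∑ a, y a = 0)
      = Fintype.piFinset fun _ : Fin 0 => Icc 1 0 by
    apply Finset.filter_true_of_mem
    intro y _
    simp]
  rw [show (Fintype.piFinset fun _ : Fin 0 => Finset.range (hi+1)).filter
        (fun u => ∀ a b : Fin 0, a ≤ b → u b ≤ u a)
      = Fintype.piFinset fun _ : Fin 0 => Finset.range (hi+1) by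
    apply Finset.filter_true_of_mem
    intro u _
    intro a
    exact absurd a.2 (by omega)]
  simp


lemma Yterm_pos_zero {A : ℕ → ℤ → R} {r d n hi : ℕ} (h : 1 ≤ n) : Yterm A r d n hi 0 = 0 := by
  rw [Yterm, Finset.sum_eq_zero]
  intro y hy
  exfalso
  rw [mem_filter] at hy
  have := hy.2
  simp only [Finset.univ_eq_empty, Finset.sum_empty] at this
  omega

lemma cons_decr_iff {m hi : ℕ} {u' : Fin m → ℕ} (hb : ∀ a, u' a ≤ hi) :
    (∀ a b : Fin (m+1), a ≤ b →
        (Fin.cons hi u' : Fin (m+1) → ℕ) b ≤ (Fin.cons hi u' : Fin (m+1) → ℕ) a)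
      ↔ (∀ a b : Fin m, a ≤ b → u' b ≤ u' a) := by
  constructor
  · intro h a b hab
    have := h a.succ b.succ (Fin.succ_le_succ_iff.mpr hab)
    simpa using this
  · intro h a b hab
    rcases Fin.eq_zero_or_eq_succ b with rfl | ⟨b', rfl⟩
    · have ha : a = 0 := Fin.le_zero_iff.mp hab
      subst ha
      exact le_rfl
    · rcases Fin.eq_zero_or_eq_succ a with rfl | ⟨a', rfl⟩
      · simpa using hb b'
      · have hab' : a' ≤ b' := Fin.succ_le_succ_iff.mp hab
        simpa using h a' b' hab'

lemma Yset_ambient (n k m : ℕ) (hkn : k ≤ n) :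
    (Fintype.piFinset fun _ : Fin m => Icc 1 n).filter (fun y => ∑ a, y a = n - k)
      = (Fintype.piFinset fun _ : Fin m => Icc 1 (n-k)).filter (fun y => ∑ a, y a = n - k) := by
  ext y
  simp only [mem_filter, Fintype.mem_piFinset, mem_Icc]
  constructor
  · rintro ⟨h1, h2⟩
    refine ⟨fun a => ⟨(h1 a).1, ?_⟩, h2⟩
    calc y a ≤ ∑ b, y b := Finset.single_le_sum (fun b _ => Nat.zero_le _) (mem_univ a)
    _ = n - k := h2
  · rintro ⟨h1, h2⟩
    exact ⟨fun a => ⟨(h1 a).1, le_trans (h1 a).2 (by omega)⟩, h2⟩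

lemma Yterm_split (A : ℕ → ℤ → R) (r d n hi m : ℕ) :
    Yterm A r d n hi (m+1)
      = Ytop A r d n hi m + (if hi = 0 then 0 else Yterm A r d n (hi-1) (m+1)) := by
  rcases Nat.eq_zero_or_pos hi with rfl | hpos
  · rw [if_pos rfl, add_zero, Yterm, Ytop]
    refine sum_congr rfl fun y _ => ?_
    congr 1
    ext u
    simp only [mem_filter, Fintype.mem_piFinset, Finset.mem_range]
    constructor
    · rintro ⟨h1, h2⟩
      exact ⟨h1, h2, by have := h1 0; omega⟩
    · rintro ⟨h1, h2, _⟩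
      exact ⟨h1, h2⟩
  · rw [if_neg (by omega)]
    simp only [Yterm, Ytop]
    rw [← Finset.sum_add_distrib]
    refine sum_congr rfl fun y _ => ?_
    rw [← Finset.sum_filter_add_sum_filter_not
      ((Fintype.piFinset fun _ : Fin (m+1) => Finset.range (hi + 1)).filter
        (fun u => ∀ a b : Fin (m+1), a ≤ b → u b ≤ u a)) (fun u => u 0 = hi)]
    congr 1
    · rw [Finset.filter_filter]
    · rw [Finset.filter_filter]
      refine sum_congr ?_ fun u _ => rfl
      ext u
      simp only [mem_filter, Fintype.mem_piFinset, Finset.mem_range]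
      constructor
      · rintro ⟨h1, h2, h3⟩
        refine ⟨fun a => ?_, h2⟩
        have hu0 : u a ≤ u 0 := h2 0 a (Fin.zero_le a)
        have := h1 0
        omega
      · rintro ⟨h1, h2⟩
        refine ⟨fun a => by have := h1 a; omega, h2, by have := h1 0; omega⟩

set_option maxHeartbeats 1000000 in
lemma Ytop_eq (A : ℕ → ℤ → R) (r d : ℕ) (n hi m : ℕ) :
    Ytop A r d n hi m
      = ∑ k ∈ Icc 1 n, (k:R) * A k ((r:ℤ) - ((n:ℤ)-(k:ℤ))*(d:ℤ) - (hi:ℤ))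
          * Yterm A r d (n-k) hi m := by
  rw [Ytop, Finset.sum_filter, sum_piFinset_succ]
  refine sum_congr rfl fun k hk => ?_
  have hk' := mem_Icc.mp hk
  have key : ∀ y' : Fin m → ℕ,
      (∑ u ∈ (Fintype.piFinset fun _ : Fin (m+1) => Finset.range (hi + 1)).filter
          (fun u => (∀ a b : Fin (m+1), a ≤ b → u b ≤ u a) ∧ u 0 = hi),
        ∏ a : Fin (m+1),
          ((Fin.cons k y' : Fin (m+1) → ℕ) a : R) * A ((Fin.cons k y' : Fin (m+1) → ℕ) a)
            ((r : ℤ) - ((n : ℤ) - ∑ b ∈ Iic a, ((Fin.cons k y' : Fin (m+1) → ℕ) b : ℤ)) * (d:ℤ)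
              - (u a : ℤ)))
      = (k:R) * A k ((r:ℤ) - ((n:ℤ)-(k:ℤ))*(d:ℤ) - (hi:ℤ)) *
          ∑ u' ∈ (Fintype.piFinset fun _ : Fin m => Finset.range (hi + 1)).filter
              (fun u => ∀ a b : Fin m, a ≤ b → u b ≤ u a),
            ∏ a : Fin m,
              (y' a : R) * A (y' a)
                ((r : ℤ) - (((n-k:ℕ) : ℤ) - ∑ b ∈ Iic a, (y' b : ℤ)) * (d:ℤ) - (u' a : ℤ)) := by
    intro y'
    rw [Finset.sum_filter, sum_piFinset_succ]
    rw [Finset.sum_eq_single_of_mem hi (self_mem_range_succ hi)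
      (fun v _ hv => Finset.sum_eq_zero fun u' _ => by
        rw [if_neg]
        rintro ⟨_, h0⟩
        rw [Fin.cons_zero] at h0
        exact hv h0)]
    rw [Finset.mul_sum, Finset.sum_filter]
    refine sum_congr rfl fun u' hu' => ?_
    have hub : ∀ a, u' a ≤ hi := by
      rw [Fintype.mem_piFinset] at hu'
      intro a
      have := Finset.mem_range.mp (hu' a)
      omega
    have hiff : ((∀ a b : Fin (m+1), a ≤ b →
            (Fin.cons hi u' : Fin (m+1) → ℕ) b ≤ (Fin.cons hi u' : Fin (m+1) → ℕ) a)
          ∧ (Fin.cons hi u' : Fin (m+1) → ℕ) 0 = hi)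
        ↔ (∀ a b : Fin m, a ≤ b → u' b ≤ u' a) := by
      rw [Fin.cons_zero, and_iff_left rfl]
      exact cons_decr_iff hub
    rcases Classical.em (∀ a b : Fin m, a ≤ b → u' b ≤ u' a) with hdec | hdec
    · rw [if_pos (hiff.mpr hdec), if_pos hdec, Fin.prod_univ_succ]
      congr 1
      · refine Finset.prod_congr rfl fun a _ => ?_
        rw [Fin.cons_succ, Fin.cons_succ]
        congr 2
        rw [sum_Iic_succ (fun b => ((Fin.cons k y' : Fin (m+1) → ℕ) b : ℤ)) a, Fin.cons_zero]
        have hc : ((n - k : ℕ) : ℤ) = (n:ℤ) - (k:ℤ) := by omega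
        rw [hc]
        have : ∑ b ∈ Iic a, ((Fin.cons k y' : Fin (m+1) → ℕ) b.succ : ℤ)
            = ∑ b ∈ Iic a, (y' b : ℤ) := by
          refine sum_congr rfl fun b _ => by rw [Fin.cons_succ]
        rw [this]
        ring
    · rw [if_neg (fun hC => hdec (hiff.mp hC)), if_neg hdec]
  have hcond : ∀ y' : Fin m → ℕ,
      (∑ a : Fin (m+1), (Fin.cons k y' : Fin (m+1) → ℕ) a = n) = (∑ a, y' a = n - k) := by
    intro y'
    rw [Fin.sum_univ_succ, Fin.cons_zero]
    have : ∑ a : Fin m, (Fin.cons k y' : Fin (m+1) → ℕ) a.succ = ∑ a, y' a :=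
      Finset.sum_congr rfl fun a _ => by rw [Fin.cons_succ]
    rw [this, eq_iff_iff]
    omega
  calc ∑ y' ∈ Fintype.piFinset (fun _ : Fin m => Icc 1 n),
        (if (∑ a : Fin (m+1), (Fin.cons k y' : Fin (m+1) → ℕ) a = n) then
          (∑ u ∈ (Fintype.piFinset fun _ : Fin (m+1) => Finset.range (hi + 1)).filter
              (fun u => (∀ a b : Fin (m+1), a ≤ b → u b ≤ u a) ∧ u 0 = hi),
            ∏ a : Fin (m+1),
              ((Fin.cons k y' : Fin (m+1) → ℕ) a : R) * A ((Fin.cons k y' : Fin (m+1) → ℕ) a)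
                ((r : ℤ) - ((n : ℤ) - ∑ b ∈ Iic a, ((Fin.cons k y' : Fin (m+1) → ℕ) b : ℤ)) * (d:ℤ)
                  - (u a : ℤ)))
          else 0)
      = ∑ y' ∈ Fintype.piFinset (fun _ : Fin m => Icc 1 n),
        (if (∑ a, y' a = n - k) then
          (k:R) * A k ((r:ℤ) - ((n:ℤ)-(k:ℤ))*(d:ℤ) - (hi:ℤ)) *
            ∑ u' ∈ (Fintype.piFinset fun _ : Fin m => Finset.range (hi + 1)).filter
                (fun u => ∀ a b : Fin m, a ≤ b → u b ≤ u a),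
              ∏ a : Fin m,
                (y' a : R) * A (y' a)
                  ((r : ℤ) - (((n-k:ℕ) : ℤ) - ∑ b ∈ Iic a, (y' b : ℤ)) * (d:ℤ) - (u' a : ℤ))
          else 0) := by
        refine sum_congr rfl fun y' _ => ?_
        rw [key y']
        exact if_congr (iff_of_eq (hcond y')) rfl rfl
    _ = ∑ y' ∈ (Fintype.piFinset fun _ : Fin m => Icc 1 (n-k)).filter (fun y => ∑ a, y a = n-k),
          (k:R) * A k ((r:ℤ) - ((n:ℤ)-(k:ℤ))*(d:ℤ) - (hi:ℤ)) *
            ∑ u' ∈ (Fintype.piFinset fun _ : Fin m => Finset.range (hi + 1)).filter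
                (fun u => ∀ a b : Fin m, a ≤ b → u b ≤ u a),
              ∏ a : Fin m,
                (y' a : R) * A (y' a)
                  ((r : ℤ) - (((n-k:ℕ) : ℤ) - ∑ b ∈ Iic a, (y' b : ℤ)) * (d:ℤ) - (u' a : ℤ)) := by
        rw [← Finset.sum_filter, Yset_ambient n k m hk'.2]
    _ = (k:R) * A k ((r:ℤ) - ((n:ℤ)-(k:ℤ))*(d:ℤ) - (hi:ℤ)) * Yterm A r d (n-k) hi m := by
        rw [Yterm, Finset.mul_sum]


lemma Nsum_reindex (A : ℕ → ℤ → R) (r d j hi : ℕ) :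
    Nsum A r d j hi = ∑ m ∈ Finset.range j, (-1:R)^(m+1) * Yterm A r d j hi (m+1) := by
  rw [Nsum, ← Finset.Ico_add_one_right_eq_Icc, Finset.sum_Ico_eq_sum_range]
  exact sum_congr rfl fun m _ => by rw [Nat.add_comm 1 m]

lemma Nsum_peel (A : ℕ → ℤ → R) (r d : ℕ) {j : ℕ} (hi : ℕ) (hj : 1 ≤ j) :
    Nsum A r d j hi
      = (if hi = 0 then 0 else Nsum A r d j (hi-1))
        - ∑ k ∈ Icc 1 j, (k:R) * A k ((r:ℤ) - ((j:ℤ)-(k:ℤ))*(d:ℤ) - (hi:ℤ))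
            * (if k = j then 1 else Nsum A r d (j-k) hi) := by
  rw [Nsum_reindex]
  have step1 : ∀ m ∈ Finset.range j, (-1:R)^(m+1) * Yterm A r d j hi (m+1)
      = (-1:R)^(m+1) * Ytop A r d j hi m
        + (-1:R)^(m+1) * (if hi = 0 then 0 else Yterm A r d j (hi-1) (m+1)) := by
    intro m _
    rw [Yterm_split, mul_add]
  rw [sum_congr rfl step1, Finset.sum_add_distrib]
  have step2 : ∑ m ∈ Finset.range j,
        (-1:R)^(m+1) * (if hi = 0 then 0 else Yterm A r d j (hi-1) (m+1))
      = (if hi = 0 then 0 else Nsum A r d j (hi-1)) := by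
    rcases Nat.eq_zero_or_pos hi with rfl | hpos
    · simp
    · have hne : hi ≠ 0 := by omega
      simp only [if_neg hne]
      rw [Nsum_reindex]
  have step3 : ∑ m ∈ Finset.range j, (-1:R)^(m+1) * Ytop A r d j hi m
      = -∑ k ∈ Icc 1 j, (k:R) * A k ((r:ℤ) - ((j:ℤ)-(k:ℤ))*(d:ℤ) - (hi:ℤ))
          * (if k = j then 1 else Nsum A r d (j-k) hi) := by
    calc ∑ m ∈ Finset.range j, (-1:R)^(m+1) * Ytop A r d j hi m
        = ∑ m ∈ Finset.range j, ∑ k ∈ Icc 1 j,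
            (-1:R)^(m+1) * ((k:R) * A k ((r:ℤ) - ((j:ℤ)-(k:ℤ))*(d:ℤ) - (hi:ℤ))
              * Yterm A r d (j-k) hi m) := by
          refine sum_congr rfl fun m _ => ?_
          rw [Ytop_eq, Finset.mul_sum]
      _ = ∑ k ∈ Icc 1 j, ∑ m ∈ Finset.range j,
            (-1:R)^(m+1) * ((k:R) * A k ((r:ℤ) - ((j:ℤ)-(k:ℤ))*(d:ℤ) - (hi:ℤ))
              * Yterm A r d (j-k) hi m) := Finset.sum_comm
      _ = ∑ k ∈ Icc 1 j, (k:R) * A k ((r:ℤ) - ((j:ℤ)-(k:ℤ))*(d:ℤ) - (hi:ℤ))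
            * (-(∑ m ∈ Finset.range j, (-1:R)^m * Yterm A r d (j-k) hi m)) := by
          refine sum_congr rfl fun k _ => ?_
          rw [mul_neg, Finset.mul_sum, ← Finset.sum_neg_distrib]
          refine sum_congr rfl fun m _ => ?_
          rw [pow_succ]
          ring
      _ = -∑ k ∈ Icc 1 j, (k:R) * A k ((r:ℤ) - ((j:ℤ)-(k:ℤ))*(d:ℤ) - (hi:ℤ))
            * (if k = j then 1 else Nsum A r d (j-k) hi) := by
          rw [← Finset.sum_neg_distrib]
          refine sum_congr rfl fun k hk => ?_
          have hk' := mem_Icc.mp hk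
          have inner : ∑ m ∈ Finset.range j, (-1:R)^m * Yterm A r d (j-k) hi m
              = (if k = j then 1 else Nsum A r d (j-k) hi) := by
            rcases eq_or_ne k j with rfl | hne
            · rw [if_pos rfl, Nat.sub_self]
              rw [Finset.sum_eq_single_of_mem 0 (Finset.mem_range.mpr (by omega))
                (fun m _ hm => by
                  rw [Yterm_eq_zero (by omega), mul_zero])]
              rw [Yterm_zero_zero, pow_zero, one_mul]
            · rw [if_neg hne, Nsum]
              refine (Finset.sum_subset (fun x hx => ?_) (fun m hm hm' => ?_)).symm
              · have := mem_Icc.mp hx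
                exact Finset.mem_range.mpr (by omega)
              · have h1 := Finset.mem_range.mp hm
                rcases Nat.eq_zero_or_pos m with rfl | hmpos
                · rw [Yterm_pos_zero (by omega), mul_zero]
                · have : j - k < m := by
                    by_contra hcon
                    exact hm' (mem_Icc.mpr ⟨hmpos, by omega⟩)
                  rw [Yterm_eq_zero this, mul_zero]
          rw [inner]
          ring
  rw [step2, step3]
  ring

lemma Nsum_eq_psi (A : ℕ → ℤ → R) (r d : ℕ) :
    ∀ n j hi : ℕ, 1 ≤ j → j + hi ≤ n → Nsum A r d j hi = psi A r d 0 (hi:ℤ) j := by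
  intro n
  induction n with
  | zero => intro j hi hj hn; omega
  | succ n ih =>
    intro j hi hj hn
    rw [Nsum_peel A r d hi hj, psi_rec1 A r d (by positivity) hj]
    congr 1
    · rcases Nat.eq_zero_or_pos hi with rfl | hpos
      · rw [if_pos rfl, psi_eq_zero A r d (by norm_num) hj]
      · rw [if_neg (by omega), ih j (hi-1) hj (by omega)]
        congr 1
        omega
    · refine sum_congr rfl fun k hk => ?_
      have hk' := mem_Icc.mp hk
      rcases eq_or_ne k j with rfl | hne
      · rw [if_pos rfl, Nat.sub_self, psi_zero]
      · rw [if_neg hne, ih (j-k) hi (by omega) (by omega)]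


lemma Cfun_eq_psi (A : ℕ → ℤ → R) (r d i j : ℕ) :
    Cfun A r d i j = psi A r d 0 ((i:ℤ) - (j:ℤ)*(d:ℤ)) j := by
  have hcast : ((j*d : ℕ):ℤ) = (j:ℤ)*(d:ℤ) := by push_cast; ring
  rcases Nat.eq_zero_or_pos j with rfl | hj
  · rw [Cfun, if_pos rfl, psi_zero]
  rcases lt_or_ge i (j*d) with hlt | hle
  · rw [Cfun, if_neg (by omega), if_pos hlt, psi_eq_zero A r d (by omega) hj]
  · rw [Cfun, if_neg (by omega), if_neg (by omega)]
    have h1 : (∑ ℓ ∈ Icc 1 j, (-1 : R) ^ ℓ *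
        ∑ y ∈ (Fintype.piFinset fun _ : Fin ℓ => Icc 1 j).filter
            (fun y => ∑ a, y a = j),
          ∑ u ∈ (Fintype.piFinset fun _ : Fin ℓ => Finset.range (i - j * d + 1)).filter
              (fun u => ∀ a b : Fin ℓ, a ≤ b → u b ≤ u a),
            ∏ a : Fin ℓ,
              (y a : R) *
                A (y a) ((r : ℤ) - ((j : ℤ) - ∑ b ∈ Iic a, (y b : ℤ)) * (d : ℤ) - (u a : ℤ)))
        = Nsum A r d j (i - j*d) := by
      simp only [Nsum, Yterm]
    rw [h1, Nsum_eq_psi A r d (j + (i - j*d)) j (i - j*d) hj le_rfl]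
    congr 1
    omega

lemma Dfun_eq_neg_Nsum (A : ℕ → ℤ → R) (r d j : ℕ) :
    Dfun A r d j = -Nsum A r d j (r + 1 - j*d) := by
  rw [Dfun, Nsum, ← Finset.sum_neg_distrib]
  refine sum_congr rfl fun ℓ _ => ?_
  simp only [Yterm]
  rw [pow_succ]
  ring

/-- The key combinatorial identity behind the computation of `E'`:
`∑_{i=0}^r Coeff(H^i ⋆ H^{r-i}, q^j H^{⋆(r-jd)}) = -(r-jd+1)·Coeff(H^{⋆(r+1)}, q^j H^{⋆(r+1-jd)})`.
The inner convolution over `h + s = j` with `hd ≤ i`, `sd ≤ r-i` is automatic since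
`Cfun A r d i h = 0` when `h·d > i`.  The symmetry hypothesis is
`α^k_{r-t} = α^k_{kd+t-1}`. -/
theorem Cfun_convolution_eq (A : ℕ → ℤ → R) (r d : ℕ) (hr : 1 ≤ r) (hd : 1 ≤ d)
    (hdr : d ≤ r)
    (hsym : ∀ (k : ℕ) (t : ℤ), 1 ≤ k →
      A k ((r : ℤ) - t) = A k ((k : ℤ) * (d : ℤ) + t - 1)) :
    ∀ j : ℕ, 1 ≤ j → j ≤ r / d →
      ∑ i ∈ Finset.range (r + 1), ∑ h ∈ Finset.range (j + 1),
          Cfun A r d i h * Cfun A r d (r - i) (j - h)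
        = -((r - j * d + 1 : ℕ) : R) * Dfun A r d j := by
  intro j hj hjr
  have hjd : j * d ≤ r := by
    calc j * d ≤ (r/d) * d := Nat.mul_le_mul_right d hjr
    _ ≤ r := Nat.div_mul_le_self r d
  have hcastjd : ((j*d : ℕ):ℤ) = (j:ℤ)*(d:ℤ) := by push_cast; ring
  -- RHS
  have hD : Dfun A r d j = -psi A r d 0 ((r:ℤ) - (j:ℤ)*(d:ℤ) + 1) j := by
    rw [Dfun_eq_neg_Nsum, Nsum_eq_psi A r d (j + (r+1-j*d)) j (r+1-j*d) hj le_rfl]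
    congr 2
    omega
  -- pointwise rewrite of the summand
  have hstep : ∀ i ∈ Finset.range (r+1), ∀ h ∈ Finset.range (j+1),
      Cfun A r d i h * Cfun A r d (r-i) (j-h)
        = psi A r d ((i:ℤ)+1) (((r:ℤ) - (j:ℤ)*(d:ℤ) + 1) + (h:ℤ)*(d:ℤ)) (j-h)
            * psi A r d 0 ((i:ℤ) - (h:ℤ)*(d:ℤ)) h := by
    intro i hi h hh
    have hi' := Finset.mem_range.mp hi
    have hh' := Finset.mem_range.mp hh
    rw [Cfun_eq_psi, Cfun_eq_psi,
      psi_flip A r d hsym 0 (((r-i:ℕ):ℤ) - ((j-h:ℕ):ℤ)*(d:ℤ)) (j-h)]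
    have e1 : ((j-h:ℕ):ℤ) = (j:ℤ)-(h:ℤ) := by omega
    have e2 : ((r-i:ℕ):ℤ) = (r:ℤ)-(i:ℤ) := by omega
    have e3 : (r:ℤ) - ((j-h:ℕ):ℤ)*(d:ℤ) + 1 - (((r-i:ℕ):ℤ) - ((j-h:ℕ):ℤ)*(d:ℤ))
        = (i:ℤ)+1 := by rw [e1, e2]; ring
    have e4 : (r:ℤ) - ((j-h:ℕ):ℤ)*(d:ℤ) + 1 - 0
        = ((r:ℤ) - (j:ℤ)*(d:ℤ) + 1) + (h:ℤ)*(d:ℤ) := by rw [e1]; ring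
    rw [e3, e4, mul_comm]
  rw [Finset.sum_congr rfl (fun i hi => Finset.sum_congr rfl (fun h hh => hstep i hi h hh)),
    Finset.sum_comm]
  -- per h : reindex i ↦ h*d + c
  have hcol : ∀ h ∈ Finset.range (j+1),
      ∑ i ∈ Finset.range (r+1),
          psi A r d ((i:ℤ)+1) (((r:ℤ) - (j:ℤ)*(d:ℤ) + 1) + (h:ℤ)*(d:ℤ)) (j-h)
            * psi A r d 0 ((i:ℤ) - (h:ℤ)*(d:ℤ)) h
        = ∑ c ∈ Finset.range (r - j*d + 1),
            psi A r d ((c:ℤ)+1+(h:ℤ)*(d:ℤ)) (((r:ℤ) - (j:ℤ)*(d:ℤ) + 1) + (h:ℤ)*(d:ℤ)) (j-h)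
              * psi A r d 0 (c:ℤ) h := by
    intro h hh
    have hh' := Finset.mem_range.mp hh
    have hhd : h * d ≤ j * d := Nat.mul_le_mul_right d (by omega)
    have hcasthd : ((h*d : ℕ):ℤ) = (h:ℤ)*(d:ℤ) := by push_cast; ring
    rw [← Finset.sum_subset
      (show Finset.Ico (h*d) (h*d + (r - j*d + 1)) ⊆ Finset.range (r+1) by
        intro x hx
        have := Finset.mem_Ico.mp hx
        exact Finset.mem_range.mpr (by omega))
      (fun i hi hi2 => by
        have hi' := Finset.mem_range.mp hi
        rw [Finset.mem_Ico, not_and_or, not_le, not_lt] at hi2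
        rcases hi2 with hlow | hhigh
        · -- i < h*d : second factor vanishes (and h ≥ 1)
          have hh1 : 1 ≤ h := by
            rcases Nat.eq_zero_or_pos h with rfl | hp
            · simp at hlow
            · exact hp
          rw [psi_eq_zero A r d (show (i:ℤ) - (h:ℤ)*(d:ℤ) < 0 by omega) hh1, mul_zero]
        · -- i ≥ h*d + (r - j*d + 1) : first factor vanishes
          have hhj : 1 ≤ j - h := by
            rcases eq_or_ne h j with rfl | hne
            · omega
            · omega
          rw [psi_eq_zero A r d
            (show ((r:ℤ) - (j:ℤ)*(d:ℤ) + 1) + (h:ℤ)*(d:ℤ) < (i:ℤ)+1 by omega) hhj,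
            zero_mul])]
    rw [Finset.sum_Ico_eq_sum_range]
    rw [show h*d + (r - j*d + 1) - h*d = r - j*d + 1 by omega]
    refine sum_congr rfl fun c hc => ?_
    have e5 : ((h*d + c : ℕ):ℤ) - (h:ℤ)*(d:ℤ) = (c:ℤ) := by
      push_cast
      ring
    have e6 : ((h*d + c : ℕ):ℤ) + 1 = (c:ℤ)+1+(h:ℤ)*(d:ℤ) := by
      push_cast
      ring
    rw [e5, e6]
  rw [Finset.sum_congr rfl hcol, Finset.sum_comm]
  have hsplit : ∀ c ∈ Finset.range (r - j*d + 1),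
      ∑ h ∈ Finset.range (j+1),
          psi A r d ((c:ℤ)+1+(h:ℤ)*(d:ℤ)) (((r:ℤ) - (j:ℤ)*(d:ℤ) + 1) + (h:ℤ)*(d:ℤ)) (j-h)
            * psi A r d 0 (c:ℤ) h
        = psi A r d 0 ((r:ℤ) - (j:ℤ)*(d:ℤ) + 1) j := by
    intro c hc
    have hc' := Finset.mem_range.mp hc
    have h1 : (0:ℤ) - 1 ≤ (c:ℤ) := by omega
    have h2 : (c:ℤ) ≤ (r:ℤ) - (j:ℤ)*(d:ℤ) + 1 := by omega
    exact (psi_split A r d h1 h2).symm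
  rw [Finset.sum_congr rfl hsplit, Finset.sum_const, Finset.card_range, hD, nsmul_eq_mul]
  ring
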